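/- arXiv:1704.03545 — 8 statements merged into one kernel-verified Lean document; each statement's English description precedes it below -/
import Mathlib

section
/- Let Z be a finite-dimensional vector space over a finite field 𝔽_q of odd cardinality q, and let g be an 𝔽_q-linear automorphism of Z. Then the sign of the permutation of the finite set Z induced by g equals (det g)^((q−1)/2); more precisely, the permutation is even if and only if (det_{𝔽_q} g)^((q−1)/2) = 1 in 𝔽_q, i.e. if and only if det g is a square in 𝔽_qˣ. -/
open Equiv Equiv.Perm Matrix

section Aux

set_option linter.unusedSectionVars false

lemma unitsInt_pow_odd (u : ℤˣ) {m : ℕ} (hm : Odd m) : u ^ m = u := by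
  rcases Int.units_eq_one_or u with rfl | rfl
  · simp
  · simp [hm.neg_one_pow]

variable {K : Type*} [Field K] [Fintype K] [DecidableEq K]

/-- Multiplication by a unit, as a monoid hom to permutations. -/
def mulPermHom (K : Type*) [Field K] : Kˣ →* Equiv.Perm K where
  toFun u := Equiv.mulLeft₀ (u : K) u.ne_zero
  map_one' := by ext x; simp
  map_mul' u v := by ext x; simp [mul_assoc]

@[simp] lemma mulPermHom_apply (u : Kˣ) (x : K) : mulPermHom K u x = u * x := rfl

lemma char_ne_two (hq : Odd (Fintype.card K)) : ringChar K ≠ 2 := by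
  intro h
  have := FiniteField.even_card_of_char_two (F := K) h
  rw [Nat.odd_iff] at hq
  omega


/-- The automorphism group of a module, mapped to permutations. -/
def linPermHom (K M : Type*) [Field K] [AddCommGroup M] [Module K M] :
    (M ≃ₗ[K] M) →* Equiv.Perm M where
  toFun e := e.toEquiv
  map_one' := rfl
  map_mul' e f := rfl

@[simp] lemma linPermHom_apply {M : Type*} [AddCommGroup M] [Module K M]
    (e : M ≃ₗ[K] M) (x : M) : linPermHom K M e x = e x := rfl

lemma sign_mulPermHom (hq : Odd (Fintype.card K)) (u : Kˣ) :
    ((Equiv.Perm.sign (mulPermHom K u) : ℤˣ) : ℤ) = quadraticChar K (u : K) := by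
  obtain ⟨g, hg⟩ := IsCyclic.exists_generator (α := Kˣ)
  have horder : orderOf g = Fintype.card K - 1 := by
    rw [orderOf_eq_card_of_forall_mem_zpowers hg, Nat.card_eq_fintype_card, Fintype.card_units]
  have hq3 : 3 ≤ Fintype.card K := by
    have h2 : 2 ≤ Fintype.card K := Fintype.one_lt_card
    rw [Nat.odd_iff] at hq; omega
  have hg1 : g ≠ 1 := by
    intro h; rw [h, orderOf_one] at horder; omega
  have hg1' : (g : K) ≠ 1 := by
    intro h; exact hg1 (Units.ext (by simpa using h))
  -- the generator is not a square
  have hgns : ¬ IsSquare (g : K) := by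
    rw [FiniteField.isSquare_iff (char_ne_two hq) (Units.ne_zero g)]
    intro h
    have : orderOf g ∣ Fintype.card K / 2 := by
      apply orderOf_dvd_of_pow_eq_one
      ext
      push_cast
      exact h
    rw [horder] at this
    have := Nat.le_of_dvd (by omega) this
    omega
  -- the permutation attached to the generator is a cycle
  have hcyc : (mulPermHom K g).IsCycle := by
    refine ⟨1, ?_, fun y hy => ?_⟩
    · simpa using hg1'
    · have hy0 : y ≠ 0 := by rintro rfl; simp at hy
      obtain ⟨n, hn⟩ : Units.mk0 y hy0 ∈ Submonoid.powers g := by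
        rw [mem_powers_iff_mem_zpowers]; exact hg _
      have hn' : g ^ n = Units.mk0 y hy0 := hn
      refine ⟨(n : ℤ), ?_⟩
      rw [zpow_natCast, ← map_pow, mulPermHom_apply, mul_one, hn']
      rfl
  -- its sign is -1
  have hsupp : (mulPermHom K g).support = {(0 : K)}ᶜ := by
    ext y
    simp only [Equiv.Perm.mem_support, Finset.mem_compl, Finset.mem_singleton, mulPermHom_apply]
    constructor
    · intro h; rintro rfl; simp at h
    · intro h hc
      exact hg1' (mul_right_cancel₀ h (by rw [hc, one_mul]))
  have hsigng : Equiv.Perm.sign (mulPermHom K g) = -1 := by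
    rw [hcyc.sign, hsupp, Finset.card_compl, Finset.card_singleton, Fintype.card_eq_nat_card]
    rw [Nat.card_eq_fintype_card]
    have : Even (Fintype.card K - 1) := by
      rw [Nat.odd_iff] at hq
      rw [Nat.even_sub (by omega), Nat.even_iff, Nat.even_iff]
      omega
    rw [this.neg_one_pow]
  obtain ⟨n, hn⟩ : u ∈ Submonoid.powers g := by
    rw [mem_powers_iff_mem_zpowers]; exact hg _
  have hn' : g ^ n = u := hn
  have hqc : quadraticChar K (g : K) = -1 :=
    quadraticChar_neg_one_iff_not_isSquare.mpr hgns
  rw [← hn']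
  simp only [map_pow, Units.val_pow_eq_pow_val, hsigng, hqc]
  push_cast
  ring

lemma perm_prodCongr_eq {α β : Type*} (e : Equiv.Perm α) (f : Equiv.Perm β) :
    (e.prodCongr f : Equiv.Perm (α × β)) =
      (Equiv.prodCongrLeft fun _ : β => e) * (Equiv.prodCongrRight fun _ : α => f) := by
  ext ⟨a, b⟩ <;> rfl

lemma sign_prodCongr {α β : Type*} [DecidableEq α] [Fintype α] [DecidableEq β] [Fintype β]
    (e : Equiv.Perm α) (f : Equiv.Perm β) :
    Equiv.Perm.sign (e.prodCongr f) =
      Equiv.Perm.sign e ^ Fintype.card β * Equiv.Perm.sign f ^ Fintype.card α := by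
  rw [perm_prodCongr_eq, _root_.map_mul, Equiv.Perm.sign_prodCongrLeft, Equiv.Perm.sign_prodCongrRight]
  simp [Finset.prod_const]

lemma sign_piCongrRight_fin (hq : Odd (Fintype.card K)) :
    ∀ (n : ℕ) (F : Fin n → Equiv.Perm K),
      Equiv.Perm.sign (Equiv.piCongrRight F : Equiv.Perm (Fin n → K)) =
        ∏ i, Equiv.Perm.sign (F i)
  | 0, F => by
    have h1 : (Equiv.piCongrRight F : Equiv.Perm (Fin 0 → K)) = 1 := by
      ext x i; exact absurd i.2 (by omega)
    simp [h1]
  | n + 1, F => by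
    have key : Equiv.Perm.sign (Equiv.piCongrRight F : Equiv.Perm (Fin (n+1) → K)) =
        Equiv.Perm.sign ((F 0).prodCongr
          (Equiv.piCongrRight fun i : Fin n => F i.succ)) := by
      apply Equiv.Perm.sign_eq_sign_of_equiv _ _ (Fin.consEquiv fun _ : Fin (n+1) => K).symm
      intro x
      rfl
    rw [key, sign_prodCongr, sign_piCongrRight_fin hq n fun i => F i.succ,
      Fin.prod_univ_succ]
    have hodd1 : Odd (Fintype.card (Fin n → K)) := by
      simpa [Fintype.card_fun] using hq.pow
    rw [unitsInt_pow_odd _ hodd1, unitsInt_pow_odd _ (by simpa using hq)]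

lemma transvection_pow {n : Type*} [DecidableEq n] [Fintype n] {i j : n} (hij : i ≠ j)
    (c : K) (m : ℕ) :
    (Matrix.transvection i j c) ^ m = Matrix.transvection i j ((m : K) * c) := by
  induction m with
  | zero => simp
  | succ m ih =>
      rw [pow_succ, ih, Matrix.transvection_mul_transvection_same _ _ hij]
      push_cast
      ring_nf

/-- The sign of an invertible linear map on `Fin n → K` is the quadratic character of
its determinant. -/
lemma key_matrix (hq : Odd (Fintype.card K)) (n : ℕ) (M : Matrix (Fin n) (Fin n) K)
    (hM : M.det ≠ 0) :
    ∀ e : (Fin n → K) ≃ₗ[K] (Fin n → K), (e : (Fin n → K) →ₗ[K] (Fin n → K)) = Matrix.toLin' M →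
      ((Equiv.Perm.sign (linPermHom K (Fin n → K) e) : ℤˣ) : ℤ) = quadraticChar K M.det := by
  refine Matrix.diagonal_transvection_induction_of_det_ne_zero
    (fun N => ∀ e : (Fin n → K) ≃ₗ[K] (Fin n → K),
      (e : (Fin n → K) →ₗ[K] (Fin n → K)) = Matrix.toLin' N →
      ((Equiv.Perm.sign (linPermHom K (Fin n → K) e) : ℤˣ) : ℤ) = quadraticChar K N.det)
    M hM ?_ ?_ ?_
  · intro D hD
    intro e he
    have hDi : ∀ i, D i ≠ 0 := by
      intro i hi
      apply hD
      rw [Matrix.det_diagonal]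
      exact Finset.prod_eq_zero (Finset.mem_univ i) hi
    have hperm : linPermHom K (Fin n → K) e =
        Equiv.piCongrRight fun i => mulPermHom K (Units.mk0 (D i) (hDi i)) := by
      ext x j
      have : e x = Matrix.toLin' (Matrix.diagonal D) x := by rw [← he]; rfl
      simp only [linPermHom_apply, this, Matrix.toLin'_apply]
      simp [Matrix.mulVec_diagonal]
    rw [hperm, sign_piCongrRight_fin hq, Matrix.det_diagonal, map_prod]
    push_cast
    exact Finset.prod_congr rfl fun i _ => sign_mulPermHom hq _
  · intro t e he
    obtain ⟨i, j, hij, c⟩ := t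
    rw [Matrix.TransvectionStruct.toMatrix_mk] at he
    have hchar : Nat.Prime (ringChar K) := by
      have : ringChar K ≠ 0 := CharP.char_ne_zero_of_finite K (ringChar K)
      exact (CharP.char_is_prime_or_zero K (ringChar K)).resolve_right this
    have hoddp : Odd (ringChar K) := hchar.odd_of_ne_two (char_ne_two hq)
    have hcast : ((ringChar K : ℕ) : K) = 0 := by
      haveI := ringChar.charP K
      exact CharP.cast_eq_zero K (ringChar K)
    have hTp : Matrix.transvection i j c ^ ringChar K = 1 := by
      rw [transvection_pow hij, hcast, zero_mul, Matrix.transvection_zero]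
    have hlin : ∀ m : ℕ, ((e ^ m : (Fin n → K) ≃ₗ[K] (Fin n → K)) :
        (Fin n → K) →ₗ[K] (Fin n → K)) = Matrix.toLin' (Matrix.transvection i j c ^ m) := by
      intro m
      induction m with
      | zero => simp
      | succ m ih =>
          rw [pow_succ, pow_succ, Matrix.toLin'_mul, ← ih, ← he]
          ext x
          rfl
    have hep : e ^ ringChar K = 1 := by
      apply LinearEquiv.toLinearMap_injective
      rw [hlin, hTp]
      simp
    have hs1 : Equiv.Perm.sign (linPermHom K (Fin n → K) e) = 1 := by
      have h1 : (Equiv.Perm.sign (linPermHom K (Fin n → K) e)) ^ (ringChar K) = 1 := by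
        rw [← map_pow, ← map_pow, hep, _root_.map_one, _root_.map_one]
      rw [← unitsInt_pow_odd (Equiv.Perm.sign (linPermHom K (Fin n → K) e)) hoddp, h1]
    rw [hs1, Matrix.TransvectionStruct.toMatrix_mk, Matrix.det_transvection_of_ne i j hij,
      _root_.map_one]
    simp
  · intro A B hA hB ihA ihB e he
    set eA := A.toLinearEquiv' (A.invertibleOfIsUnitDet (isUnit_iff_ne_zero.mpr hA)) with heA
    set eB := B.toLinearEquiv' (B.invertibleOfIsUnitDet (isUnit_iff_ne_zero.mpr hB)) with heB
    have hAe : (eA : (Fin n → K) →ₗ[K] (Fin n → K)) = Matrix.toLin' A :=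
      Matrix.toLinearEquiv'_apply _ _
    have hBe : (eB : (Fin n → K) →ₗ[K] (Fin n → K)) = Matrix.toLin' B :=
      Matrix.toLinearEquiv'_apply _ _
    have hee : e = eA * eB := by
      apply LinearEquiv.toLinearMap_injective
      rw [he, Matrix.toLin'_mul]
      ext x
      simp [hAe, hBe]
    rw [hee, _root_.map_mul, _root_.map_mul, Matrix.det_mul, _root_.map_mul]
    push_cast
    rw [ihA eA hAe, ihB eB hBe]

end Aux

/-- The sign of the permutation of a finite-dimensional vector space `Z` over a finite
field `K` of odd cardinality `q` induced by a linear automorphism `g` equals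
`(det g) ^ ((q - 1) / 2)`: the permutation is even iff `(det g) ^ ((q - 1) / 2) = 1`,
iff `det g` is a square in `Kˣ`. -/
theorem stmt0 (K : Type*) [Field K] [Fintype K] (hq : Odd (Fintype.card K))
    (Z : Type*) [AddCommGroup Z] [Module K Z] [FiniteDimensional K Z]
    [Fintype Z] [DecidableEq Z] (g : Z ≃ₗ[K] Z) :
    (Equiv.Perm.sign (g.toEquiv : Equiv.Perm Z) = 1 ↔
      LinearMap.det (g : Z →ₗ[K] Z) ^ ((Fintype.card K - 1) / 2) = 1) ∧
    (Equiv.Perm.sign (g.toEquiv : Equiv.Perm Z) = 1 ↔ IsSquare (LinearEquiv.det g)) := by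
  letI : DecidableEq K := Classical.decEq K
  set n := Module.finrank K Z with hn
  let b : Module.Basis (Fin n) K Z := Module.finBasis K Z
  let e' : (Fin n → K) ≃ₗ[K] (Fin n → K) := (b.equivFun.symm.trans g).trans b.equivFun
  set M := LinearMap.toMatrix' (e' : (Fin n → K) →ₗ[K] (Fin n → K)) with hMdef
  have hM : (e' : (Fin n → K) →ₗ[K] (Fin n → K)) = Matrix.toLin' M :=
    (Matrix.toLin'_toMatrix' _).symm
  have hdet_e' : LinearMap.det (e' : (Fin n → K) →ₗ[K] (Fin n → K)) =
      LinearMap.det (g : Z →ₗ[K] Z) := by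
    have h1 : (e' : (Fin n → K) →ₗ[K] (Fin n → K)) =
        (b.equivFun : Z →ₗ[K] (Fin n → K)) ∘ₗ (g : Z →ₗ[K] Z) ∘ₗ
          (b.equivFun.symm : (Fin n → K) →ₗ[K] Z) := rfl
    rw [h1, LinearMap.det_conj]
  have hdetM : M.det = LinearMap.det (g : Z →ₗ[K] Z) := by
    rw [hMdef, LinearMap.det_toMatrix', hdet_e']
  set d := LinearMap.det (g : Z →ₗ[K] Z) with hd
  have hd0 : d ≠ 0 := g.isUnit_det'.ne_zero
  have hdetne : M.det ≠ 0 := by rw [hdetM]; exact hd0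
  have hsign := key_matrix hq n M hdetne e' hM
  have hsigneq : Equiv.Perm.sign (linPermHom K (Fin n → K) e') =
      Equiv.Perm.sign (g.toEquiv : Equiv.Perm Z) := by
    have h2 : linPermHom K (Fin n → K) e' =
        (b.equivFun.toEquiv.symm.trans g.toEquiv).trans b.equivFun.toEquiv := by
      ext x; rfl
    rw [h2]
    exact Equiv.Perm.sign_symm_trans_trans _ _
  have hquad : ((Equiv.Perm.sign (g.toEquiv : Equiv.Perm Z) : ℤˣ) : ℤ) = quadraticChar K d := by
    rw [← hsigneq, hsign, hdetM]
  have hchar2 : ringChar K ≠ 2 := char_ne_two hq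
  have hcoe : (Equiv.Perm.sign (g.toEquiv : Equiv.Perm Z) = 1) ↔
      ((Equiv.Perm.sign (g.toEquiv : Equiv.Perm Z) : ℤˣ) : ℤ) = 1 := by
    rw [Units.ext_iff]; rfl
  have hdiv : Fintype.card K / 2 = (Fintype.card K - 1) / 2 := by
    obtain ⟨k, hk⟩ := hq
    omega
  constructor
  · rw [hcoe, hquad, quadraticChar_one_iff_isSquare hd0,
      FiniteField.isSquare_iff hchar2 hd0, hdiv]
  · rw [hcoe, hquad, quadraticChar_one_iff_isSquare hd0,
      FiniteField.isSquare_iff hchar2 hd0,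
      FiniteField.unit_isSquare_iff hchar2 (LinearEquiv.det g)]
    simp [Units.ext_iff, LinearEquiv.coe_det]
    exact Iff.rfl
end

section
/- Let Z be a finite-dimensional vector space over a finite field of odd cardinality, let Z* be its dual space, let g be a linear automorphism of Z, and let ᵗg be the transpose automorphism of Z* (defined by (ᵗg φ)(v) = φ(g v)). Then the permutation of the finite set Z induced by g and the permutation of the finite set Z* induced by ᵗg have the same sign; the same holds for the permutation of Z* induced by (ᵗg)⁻¹. -/
open Equiv Finset

namespace Stmt2Aux

variable {α : Type*} [Fintype α] [DecidableEq α]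

/-- number of fixed points of `σ ^ n` -/
def fixc (σ : Perm α) (n : ℕ) : ℕ := (univ.filter fun x => (σ ^ n) x = x).card

/-- number of points in cycles of length exactly `d` -/
def Tc (σ : Perm α) (d : ℕ) : ℕ :=
  (σ.support.filter fun x => (σ.cycleOf x).support.card = d).card

lemma pow_apply_eq_iff (σ : Perm α) {x : α} (hx : x ∈ σ.support) (n : ℕ) :
    (σ ^ n) x = x ↔ (σ.cycleOf x).support.card ∣ n :=
  (σ.isCycleOn_support_cycleOf x).pow_apply_eq
    (Equiv.Perm.mem_support_cycleOf_iff.mpr ⟨Equiv.Perm.SameCycle.refl _ _, hx⟩)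

lemma fixc_eq (σ : Perm α) {n : ℕ} (hn : n ≠ 0) :
    fixc σ n = (Fintype.card α - σ.support.card)
      + ∑ d ∈ n.divisors, Tc σ d := by
  have hsplit : (univ.filter fun x => (σ ^ n) x = x)
      = σ.supportᶜ ∪ (σ.support.filter fun x => (σ.cycleOf x).support.card ∣ n) := by
    ext x
    by_cases hx : x ∈ σ.support
    · simp [hx, pow_apply_eq_iff σ hx n]
    · have : σ x = x := by simpa [Equiv.Perm.mem_support] using hx
      simp [hx, Equiv.Perm.pow_apply_eq_self_of_apply_eq_self this]
  have hdisj : Disjoint (σ.supportᶜ)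
      (σ.support.filter fun x => (σ.cycleOf x).support.card ∣ n) := by
    exact disjoint_compl_left.mono_right (filter_subset _ _)
  have hsum : (σ.support.filter fun x => (σ.cycleOf x).support.card ∣ n).card
      = ∑ d ∈ n.divisors, Tc σ d := by
    rw [Finset.card_eq_sum_card_fiberwise
      (f := fun x => (σ.cycleOf x).support.card) (t := n.divisors)
      (fun x hx => by
        simp only [Finset.mem_coe, mem_filter] at hx
        exact Nat.mem_divisors.mpr ⟨hx.2, hn⟩)]
    apply Finset.sum_congr rfl
    intro d hd
    unfold Tc
    congr 1
    ext x
    simp only [mem_filter]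
    constructor
    · rintro ⟨⟨h1, _⟩, h3⟩; exact ⟨h1, h3⟩
    · rintro ⟨h1, h2⟩
      exact ⟨⟨h1, h2 ▸ (Nat.mem_divisors.mp hd).1⟩, h2⟩
  rw [fixc, hsplit, card_union_of_disjoint hdisj, card_compl, hsum]

lemma fixc_zero (σ : Perm α) : fixc σ 0 = Fintype.card α := by
  simp [fixc]

lemma fixc_one (σ : Perm α) : fixc σ 1 = Fintype.card α - σ.support.card := by
  unfold fixc
  rw [← card_compl σ.support]
  congr 1
  ext x
  simp [Equiv.Perm.mem_support]

lemma Tc_zero (σ : Perm α) : Tc σ 0 = 0 := by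
  rw [Tc, Finset.card_eq_zero, Finset.filter_eq_empty_iff]
  intro x hx
  have : x ∈ (σ.cycleOf x).support :=
    Equiv.Perm.mem_support_cycleOf_iff.mpr ⟨Equiv.Perm.SameCycle.refl _ _, hx⟩
  exact fun h => by simp [Finset.card_eq_zero.mp h] at this

variable {β : Type*} [Fintype β] [DecidableEq β]

lemma Tc_eq_of_fixc_eq (σ : Perm α) (τ : Perm β)
    (h : ∀ n, fixc σ n = fixc τ n) : ∀ d, Tc σ d = Tc τ d := by
  have hcard : Fintype.card α = Fintype.card β := by
    have := h 0; rwa [fixc_zero, fixc_zero] at this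
  have hsupp : σ.support.card = τ.support.card := by
    have h1 := h 1
    rw [fixc_one, fixc_one, hcard] at h1
    have h2 : σ.support.card ≤ Fintype.card β := hcard ▸ σ.support.card_le_univ
    have h3 : τ.support.card ≤ Fintype.card β := τ.support.card_le_univ
    omega
  intro d
  induction d using Nat.strong_induction_on with
  | _ d ih =>
    rcases Nat.eq_zero_or_pos d with rfl | hd
    · rw [Tc_zero, Tc_zero]
    · have hfix := h d
      rw [fixc_eq σ hd.ne', fixc_eq τ hd.ne', hcard, hsupp] at hfix
      have hins : Nat.divisors d = insert d (Nat.properDivisors d) :=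
        (Nat.insert_self_properDivisors hd.ne').symm
      rw [hins, Finset.sum_insert (fun hmem => by
          exact absurd (Nat.mem_properDivisors.mp hmem).2 (lt_irrefl d)),
        Finset.sum_insert (fun hmem => by
          exact absurd (Nat.mem_properDivisors.mp hmem).2 (lt_irrefl d))] at hfix
      have hps : ∑ e ∈ Nat.properDivisors d, Tc σ e
          = ∑ e ∈ Nat.properDivisors d, Tc τ e := by
        apply Finset.sum_congr rfl
        intro e he
        exact ih e (Nat.mem_properDivisors.mp he).2
      omega

lemma Tc_eq_mul_count (σ : Perm α) (d : ℕ) :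
    Tc σ d = d * σ.cycleType.count d := by
  have hcount : σ.cycleType.count d
      = (σ.cycleFactorsFinset.filter fun c => c.support.card = d).card := by
    rw [Equiv.Perm.cycleType_def, Multiset.count_map, Finset.card_def, Finset.filter_val]
    congr 1
    apply Multiset.filter_congr
    intro c _
    simp [eq_comm, Function.comp]
  rw [hcount, Tc]
  rw [Finset.card_eq_sum_card_fiberwise
    (f := fun x => σ.cycleOf x)
    (t := σ.cycleFactorsFinset.filter fun c => c.support.card = d)
    (fun x hx => by
      simp only [Finset.mem_coe, mem_filter] at hx ⊢
      exact ⟨Equiv.Perm.cycleOf_mem_cycleFactorsFinset_iff.mpr hx.1, hx.2⟩)]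
  rw [Finset.sum_congr rfl (fun c hc => ?_), Finset.sum_const, smul_eq_mul, mul_comm]
  -- fiber over c has card d
  simp only [mem_filter] at hc
  have hfiber : ((σ.support.filter fun x => (σ.cycleOf x).support.card = d).filter
      fun x => σ.cycleOf x = c) = c.support := by
    ext x
    simp only [mem_filter]
    constructor
    · rintro ⟨⟨hx, hcd⟩, rfl⟩
      exact Equiv.Perm.mem_support_cycleOf_iff.mpr ⟨Equiv.Perm.SameCycle.refl _ _, hx⟩
    · intro hx
      have hceq : c = σ.cycleOf x := Equiv.Perm.cycle_is_cycleOf hx hc.1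
      have hxs : x ∈ σ.support := (Equiv.Perm.support_cycleOf_le σ x) (hceq ▸ hx)
      exact ⟨⟨hxs, hceq ▸ hc.2⟩, hceq.symm⟩
  rw [hfiber, hc.2]

lemma cycleType_eq_of_fixc_eq (σ : Perm α) (τ : Perm β)
    (h : ∀ n, fixc σ n = fixc τ n) : σ.cycleType = τ.cycleType := by
  have hT := Tc_eq_of_fixc_eq σ τ h
  ext d
  rcases Nat.eq_zero_or_pos d with rfl | hd
  · rw [Multiset.count_eq_zero_of_notMem (fun hc => by
        have := Equiv.Perm.two_le_of_mem_cycleType hc; omega),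
      Multiset.count_eq_zero_of_notMem (fun hc => by
        have := Equiv.Perm.two_le_of_mem_cycleType hc; omega)]
  · have h1 := Tc_eq_mul_count σ d
    have h2 := Tc_eq_mul_count τ d
    have := hT d
    exact Nat.eq_of_mul_eq_mul_left hd (by omega)

lemma sign_eq_of_fixc_eq (σ : Perm α) (τ : Perm β)
    (h : ∀ n, fixc σ n = fixc τ n) :
    Equiv.Perm.sign σ = Equiv.Perm.sign τ := by
  rw [Equiv.Perm.sign_of_cycleType, Equiv.Perm.sign_of_cycleType,
    cycleType_eq_of_fixc_eq σ τ h]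

end Stmt2Aux

namespace Stmt2Aux

section Lin

variable {K : Type*} [Field K] [Fintype K]
variable {Z : Type*} [AddCommGroup Z] [Module K Z] [FiniteDimensional K Z]
  [Fintype Z] [DecidableEq Z]
  [Fintype (Module.Dual K Z)] [DecidableEq (Module.Dual K Z)]

lemma card_fix_eq_card_fix_dual (e : Z ≃ₗ[K] Z) :
    Fintype.card {x : Z // e x = x}
      = Fintype.card {φ : Module.Dual K Z // e.dualMap φ = φ} := by
  classical
  set f : Z →ₗ[K] Z := (e : Z →ₗ[K] Z) - LinearMap.id with hf
  letI : Fintype (LinearMap.ker f) := Fintype.ofFinite _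
  letI : Fintype (LinearMap.ker f.dualMap) := Fintype.ofFinite _
  have h1 : Fintype.card {x : Z // e x = x} = Fintype.card (LinearMap.ker f) := by
    apply Fintype.card_congr
    apply Equiv.subtypeEquivRight
    intro x
    simp [hf, LinearMap.mem_ker, sub_eq_zero]
  have h2 : Fintype.card {φ : Module.Dual K Z // e.dualMap φ = φ}
      = Fintype.card (LinearMap.ker f.dualMap) := by
    apply Fintype.card_congr
    apply Equiv.subtypeEquivRight
    intro φ
    rw [LinearMap.mem_ker]
    constructor
    · intro h
      ext x
      have := congrFun (congrArg (fun ψ : Module.Dual K Z => (ψ : Z → K)) h) x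
      simp only [LinearEquiv.dualMap_apply] at this
      simp [hf, this]
    · intro h
      ext x
      have := congrFun (congrArg (fun ψ : Module.Dual K Z => (ψ : Z → K)) h) x
      simp only [hf, LinearMap.dualMap_apply, LinearMap.sub_apply, LinearMap.id_apply,
        map_sub, LinearMap.zero_apply] at this
      simp only [LinearEquiv.dualMap_apply]
      linear_combination this
  have hr : Module.finrank K (LinearMap.ker f.dualMap)
      = Module.finrank K (LinearMap.ker f) := by
    have a1 := LinearMap.finrank_range_add_finrank_ker f
    have a2 := LinearMap.finrank_range_add_finrank_ker f.dualMap
    have a3 := LinearMap.finrank_range_dualMap_eq_finrank_range f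
    have a4 : Module.finrank K (Module.Dual K Z) = Module.finrank K Z :=
      Subspace.dual_finrank_eq
    omega
  rw [h1, h2, Module.card_eq_pow_finrank (K := K) (V := ↥(LinearMap.ker f)),
    Module.card_eq_pow_finrank (K := K) (V := ↥(LinearMap.ker f.dualMap)), hr]

lemma toEquiv_pow_apply (g : Z ≃ₗ[K] Z) (n : ℕ) (x : Z) :
    ((g.toEquiv : Equiv.Perm Z) ^ n) x = (g ^ n) x := by
  induction n generalizing x with
  | zero => rfl
  | succ n ih =>
    rw [pow_succ, pow_succ, Equiv.Perm.mul_apply]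
    have : (g ^ n * g) x = (g ^ n) (g x) := rfl
    rw [this]
    exact ih (g x)

lemma dualMap_pow_apply (g : Z ≃ₗ[K] Z) (n : ℕ) (φ : Module.Dual K Z) :
    ((g.dualMap.toEquiv : Equiv.Perm (Module.Dual K Z)) ^ n) φ = (g ^ n).dualMap φ := by
  induction n generalizing φ with
  | zero => ext x; rfl
  | succ n ih =>
    rw [pow_succ, Equiv.Perm.mul_apply,
      show (g.dualMap.toEquiv : Equiv.Perm (Module.Dual K Z)) φ = g.dualMap φ from rfl, ih]
    ext x
    simp only [LinearEquiv.dualMap_apply]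
    rw [pow_succ']
    rfl

end Lin
end Stmt2Aux

/-- Over a finite field of odd cardinality, a linear automorphism `g` of a
finite-dimensional space `Z` and its transpose `ᵗg` on the dual space `Z*`
induce permutations of the same sign; the same holds for `(ᵗg)⁻¹`. -/
theorem stmt2 (K : Type*) [Field K] [Fintype K] (hq : Odd (Fintype.card K))
    (Z : Type*) [AddCommGroup Z] [Module K Z] [FiniteDimensional K Z]
    [Fintype Z] [DecidableEq Z]
    [Fintype (Module.Dual K Z)] [DecidableEq (Module.Dual K Z)]
    (g : Z ≃ₗ[K] Z) :
    Equiv.Perm.sign (g.toEquiv : Equiv.Perm Z) =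
      Equiv.Perm.sign (g.dualMap.toEquiv : Equiv.Perm (Module.Dual K Z)) ∧
    Equiv.Perm.sign (g.toEquiv : Equiv.Perm Z) =
      Equiv.Perm.sign (g.dualMap.symm.toEquiv : Equiv.Perm (Module.Dual K Z)) := by
  have key : ∀ n, Stmt2Aux.fixc (g.toEquiv : Equiv.Perm Z) n
      = Stmt2Aux.fixc (g.dualMap.toEquiv : Equiv.Perm (Module.Dual K Z)) n := by
    intro n
    unfold Stmt2Aux.fixc
    rw [← Fintype.card_subtype, ← Fintype.card_subtype]
    have h1 : Fintype.card {x : Z // ((g.toEquiv : Equiv.Perm Z) ^ n) x = x}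
        = Fintype.card {x : Z // (g ^ n) x = x} :=
      Fintype.card_congr (Equiv.subtypeEquivRight fun x => by
        rw [Stmt2Aux.toEquiv_pow_apply])
    have h2 : Fintype.card
          {φ : Module.Dual K Z //
            ((g.dualMap.toEquiv : Equiv.Perm (Module.Dual K Z)) ^ n) φ = φ}
        = Fintype.card {φ : Module.Dual K Z // (g ^ n).dualMap φ = φ} :=
      Fintype.card_congr (Equiv.subtypeEquivRight fun φ => by
        rw [Stmt2Aux.dualMap_pow_apply])
    rw [h1, h2, Stmt2Aux.card_fix_eq_card_fix_dual (g ^ n)]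
  have hmain := Stmt2Aux.sign_eq_of_fixc_eq _ _ key
  refine ⟨hmain, ?_⟩
  have hsymm : (g.dualMap.symm.toEquiv : Equiv.Perm (Module.Dual K Z))
      = (g.dualMap.toEquiv : Equiv.Perm (Module.Dual K Z))⁻¹ := rfl
  rw [hmain, hsymm, Equiv.Perm.sign_inv]
end

section
/- Let 𝒢 be a finite group of odd order and let (ρ, V) be a finite-dimensional complex representation of 𝒢. If B₁ and B₂ are two 𝒢-invariant nondegenerate symmetric bilinear forms on V, then there exists a 𝒢-equivariant linear automorphism φ of V such that B₂(v, w) = B₁(φ(v), φ(w)) for all v, w ∈ V. -/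
open Polynomial


lemma newton_sqrt {A : Type*} [CommRing A] (h2 : IsUnit (2:A)) (t : A) (ht : IsUnit t) :
    ∀ n : ℕ, ∀ s : A, (s^2 - t)^n = 0 → ∃ r : A, r^2 = t := by
  intro n
  induction n with
  | zero =>
    intro s h
    simp only [pow_zero] at h
    refine ⟨0, ?_⟩
    have htz : t = 0 := by rw [← mul_one t, h, mul_zero]
    simp [htz]
  | succ n ih =>
    intro s he
    have hnil : IsNilpotent (s^2 - t) := ⟨n+1, he⟩
    have hs2 : IsUnit (s^2) := by
      have h' : s^2 = (s^2 - t) + t := by ring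
      rw [h']
      exact hnil.isUnit_add_right_of_commute ht (Commute.all _ _)
    have hs : IsUnit s := (isUnit_pow_iff two_ne_zero).mp hs2
    rcases Nat.eq_zero_or_pos n with hn | hn
    · subst hn
      rw [pow_one, sub_eq_zero] at he
      exact ⟨s, he⟩
    · set u : A := (((h2.unit * hs.unit)⁻¹ : Aˣ) : A) with hudef
      have hu : u * (2 * s) = 1 := by
        have : ((h2.unit * hs.unit : Aˣ) : A) = 2 * s := by
          simp [Units.val_mul, IsUnit.unit_spec]
        rw [hudef, ← this, Units.inv_mul]
      set s' := s - (s^2-t) * u with hs'def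
      have key : s'^2 - t = (s^2-t)^2 * (u*u) := by
        have expand : s'^2 - t = s^2 - t - (s^2-t)*(u*(2*s)) + (s^2-t)^2*(u*u) := by
          rw [hs'def]; ring
        rw [expand, hu]; ring
      apply ih s'
      rw [key, mul_pow, ← pow_mul]
      have h2n : (s^2-t)^(2*n) = 0 := by
        have hsplit : 2*n = (n+1) + (n-1) := by omega
        rw [hsplit, pow_add, he, zero_mul]
      rw [h2n, zero_mul]

lemma multiset_prod_dvd_pow {R : Type*} [CommMonoid R] (m : Multiset R) (f : R)
    (h : ∀ x ∈ m, x ∣ f) : m.prod ∣ f ^ Multiset.card m := by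
  induction m using Multiset.induction with
  | empty => simp
  | cons a s ih =>
    rw [Multiset.prod_cons, Multiset.card_cons, pow_succ']
    exact mul_dvd_mul (h a (Multiset.mem_cons_self a s))
      (ih fun x hx => h x (Multiset.mem_cons_of_mem hx))

lemma exists_poly_sqrt (p : ℂ[X]) (hm : p.Monic) (h0 : ∀ z ∈ p.roots, z ≠ 0) :
    ∃ q : ℂ[X], p ∣ q * q - X := by
  set I : Ideal ℂ[X] := Ideal.span {p} with hI
  set mk : ℂ[X] →+* (ℂ[X] ⧸ I) := Ideal.Quotient.mk I with hmk
  have hmkp : mk p = 0 := Ideal.Quotient.eq_zero_iff_mem.mpr (Ideal.mem_span_singleton_self p)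
  -- 2 is a unit
  have h2 : IsUnit (2 : ℂ[X] ⧸ I) := by
    refine IsUnit.of_mul_eq_one (mk (C 2⁻¹)) ?_
    have : (2 : ℂ[X] ⧸ I) = mk (C 2) := by push_cast [map_ofNat]; simp
    rw [this, ← map_mul, ← C_mul]
    norm_num
  -- constant coefficient nonzero
  have hp0 : p.coeff 0 ≠ 0 := by
    intro h
    refine h0 0 ?_ rfl
    rw [mem_roots hm.ne_zero, IsRoot.def, ← coeff_zero_eq_eval_zero]
    exact h
  -- t = mk X is a unit
  have ht : IsUnit (mk X) := by
    refine IsUnit.of_mul_eq_one (mk (-(C (p.coeff 0)⁻¹) * p.divX)) ?_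
    rw [← map_mul, ← map_one mk]
    have key : X * (-(C (p.coeff 0)⁻¹) * p.divX) - 1 = -(C (p.coeff 0)⁻¹) * p := by
      have hx : X * divX p + C (p.coeff 0) = p := X_mul_divX_add p
      have hc : C (p.coeff 0)⁻¹ * C (p.coeff 0) = 1 := by
        rw [← C_mul, inv_mul_cancel₀ hp0, C_1]
      linear_combination (-(C (p.coeff 0)⁻¹)) * hx + hc
    rw [← sub_eq_zero, ← map_sub, key]
    exact Ideal.Quotient.eq_zero_iff_mem.mpr (I.mul_mem_left _ (Ideal.mem_span_singleton_self p))
  -- initial approximation by Lagrange interpolation of a square root on the roots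
  set sqf : ℂ → ℂ := fun z => Complex.exp (Complex.log z / 2) with hsqf
  set q₀ : ℂ[X] := Lagrange.interpolate p.roots.toFinset id sqf with hq₀
  have hroot : ∀ z ∈ p.roots, (q₀ * q₀ - X).IsRoot z := by
    intro z hz
    have hzf : z ∈ p.roots.toFinset := Multiset.mem_toFinset.mpr hz
    have hinj : Set.InjOn id (p.roots.toFinset : Set ℂ) := fun a _ b _ h => h
    have heval : q₀.eval z = sqf z := by
      exact Lagrange.eval_interpolate_at_node sqf hinj hzf
    have : sqf z * sqf z = z := by
      rw [hsqf, ← Complex.exp_add, add_halves, Complex.exp_log (h0 z hz)]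
    simp [IsRoot.def, eval_sub, eval_mul, heval, this]
  have dvd1 : p ∣ (q₀ * q₀ - X) ^ p.natDegree := by
    have hsplit : p = (p.roots.map fun a => X - C a).prod :=
      (IsAlgClosed.splits p).eq_prod_roots_of_monic hm
    have hdvd : (p.roots.map fun a => X - C a).prod ∣ (q₀ * q₀ - X) ^ Multiset.card (p.roots.map fun a => X - C a) := by
      refine multiset_prod_dvd_pow _ _ ?_
      intro x hx
      obtain ⟨z, hz, rfl⟩ := Multiset.mem_map.mp hx
      exact dvd_iff_isRoot.mpr (hroot z hz)
    rw [Multiset.card_map] at hdvd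
    calc p = (p.roots.map fun a => X - C a).prod := hsplit
      _ ∣ (q₀ * q₀ - X) ^ Multiset.card p.roots := hdvd
      _ ∣ (q₀ * q₀ - X) ^ p.natDegree := pow_dvd_pow _ (p.card_roots' )
  have hnil : (mk q₀ ^ 2 - mk X) ^ p.natDegree = 0 := by
    have : (mk q₀ ^ 2 - mk X) ^ p.natDegree = mk ((q₀ * q₀ - X) ^ p.natDegree) := by
      rw [map_pow, map_sub, map_mul, pow_two]
    rw [this]
    exact Ideal.Quotient.eq_zero_iff_mem.mpr (Ideal.mem_span_singleton.mpr dvd1)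
  obtain ⟨r, hr⟩ := newton_sqrt h2 (mk X) ht p.natDegree (mk q₀) hnil
  obtain ⟨q, hq⟩ := Ideal.Quotient.mk_surjective r
  refine ⟨q, Ideal.mem_span_singleton.mp (Ideal.Quotient.eq_zero_iff_mem.mp ?_)⟩
  have : (mk (q * q - X) : ℂ[X] ⧸ I) = r ^ 2 - mk X := by
    rw [map_sub, map_mul, hq, pow_two]
  rw [this, hr, sub_self]


/-- Two invariant nondegenerate symmetric bilinear forms on a finite-dimensional complex
representation of a finite group of odd order are equivalent under an equivariant
automorphism. -/
theorem stmt4 (G : Type*) [Group G] [Fintype G] (hodd : Odd (Fintype.card G))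
    (V : Type*) [AddCommGroup V] [Module ℂ V] [FiniteDimensional ℂ V]
    (ρ : Representation ℂ G V)
    (B₁ B₂ : V →ₗ[ℂ] V →ₗ[ℂ] ℂ)
    (h₁nd : Function.Bijective (fun v => B₁ v))
    (h₁symm : ∀ v w : V, B₁ v w = B₁ w v)
    (h₁inv : ∀ (g : G) (v w : V), B₁ (ρ g v) (ρ g w) = B₁ v w)
    (h₂nd : Function.Bijective (fun v => B₂ v))
    (h₂symm : ∀ v w : V, B₂ v w = B₂ w v)
    (h₂inv : ∀ (g : G) (v w : V), B₂ (ρ g v) (ρ g w) = B₂ v w) :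
    ∃ φ : V ≃ₗ[ℂ] V, (∀ (g : G) (v : V), φ (ρ g v) = ρ g (φ v)) ∧
      ∀ v w : V, B₂ v w = B₁ (φ v) (φ w) := by
  -- the "transfer" operator T with B₁ (T v) w = B₂ v w
  let e₁ : V ≃ₗ[ℂ] (V →ₗ[ℂ] ℂ) := LinearEquiv.ofBijective B₁ h₁nd
  set T : V →ₗ[ℂ] V := e₁.symm.toLinearMap ∘ₗ B₂ with hTdef
  have hT : ∀ v : V, B₁ (T v) = B₂ v := by
    intro v
    show e₁ (e₁.symm (B₂ v)) = B₂ v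
    exact e₁.apply_symm_apply (B₂ v)
  have hTbij : Function.Bijective T := by
    have : (T : V → V) = (e₁.symm : (V →ₗ[ℂ] ℂ) → V) ∘ (fun v => B₂ v) := rfl
    rw [this]
    exact e₁.symm.bijective.comp h₂nd
  -- inverse action
  have hρinv : ∀ (g : G) (w : V), ρ g (ρ g⁻¹ w) = w := by
    intro g w
    have : ρ g * ρ g⁻¹ = 1 := by rw [← map_mul, mul_inv_cancel, map_one]
    calc ρ g (ρ g⁻¹ w) = (ρ g * ρ g⁻¹) w := rfl
      _ = w := by rw [this]; rfl
  have h₁inv' : ∀ (g : G) (v w : V), B₁ (ρ g v) w = B₁ v (ρ g⁻¹ w) := by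
    intro g v w
    conv_lhs => rw [← hρinv g w]
    exact h₁inv g v (ρ g⁻¹ w)
  have h₂inv' : ∀ (g : G) (v w : V), B₂ (ρ g v) w = B₂ v (ρ g⁻¹ w) := by
    intro g v w
    conv_lhs => rw [← hρinv g w]
    exact h₂inv g v (ρ g⁻¹ w)
  -- T is self-adjoint for B₁
  have hTadj : ∀ v w : V, B₁ (T v) w = B₁ v (T w) := by
    intro v w
    rw [hT v, h₁symm v (T w), hT w, h₂symm v w]
  -- T commutes with the action
  have hTcomm : ∀ (g : G) (v : V), T (ρ g v) = ρ g (T v) := by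
    intro g v
    apply h₁nd.1
    show B₁ (T (ρ g v)) = B₁ (ρ g (T v))
    ext w
    rw [hT, h₂inv' g v w, h₁inv' g (T v) w, hT]
  -- the minimal polynomial
  have hint : IsIntegral ℂ T := Algebra.IsIntegral.isIntegral T
  set p : ℂ[X] := minpoly ℂ T with hpdef
  have hmono : p.Monic := minpoly.monic hint
  have hroots : ∀ z ∈ p.roots, z ≠ 0 := by
    intro z hz hz0
    have hr : p.IsRoot z := (mem_roots hmono.ne_zero).mp hz
    have hev : Module.End.HasEigenvalue T z := Module.End.hasEigenvalue_of_isRoot hr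
    obtain ⟨v, hv⟩ := Module.End.HasEigenvalue.exists_hasEigenvector hev
    have : T v = 0 := by rw [hv.apply_eq_smul, hz0, zero_smul]
    exact hv.2 (hTbij.1 (by rw [this, map_zero]))
  obtain ⟨q, c, hc⟩ := exists_poly_sqrt p hmono hroots
  set S : V →ₗ[ℂ] V := aeval T q with hSdef
  have hS2 : S * S = T := by
    have hq : q * q = p * c + X := by rw [← hc]; ring
    have : S * S = aeval T (q * q) := by rw [map_mul]
    rw [this, hq, map_add, map_mul, minpoly.aeval, zero_mul, zero_add, aeval_X]
  -- powers of T commute with the action and are self-adjoint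
  have hpowcomm : ∀ (n : ℕ) (g : G) (v : V), (T ^ n) (ρ g v) = ρ g ((T ^ n) v) := by
    intro n
    induction n with
    | zero => intro g v; simp
    | succ n ih =>
      intro g v
      rw [pow_succ, Module.End.mul_apply, Module.End.mul_apply, hTcomm, ih]
  have hpowadj : ∀ (n : ℕ) (v w : V), B₁ ((T ^ n) v) w = B₁ v ((T ^ n) w) := by
    intro n
    induction n with
    | zero => intro v w; simp
    | succ n ih =>
      intro v w
      have h1 : (T ^ (n+1)) v = (T ^ n) (T v) := by rw [pow_succ]; rfl
      have h2 : (T ^ (n+1)) w = T ((T ^ n) w) := by rw [pow_succ']; rfl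
      rw [h1, h2, ih, hTadj]
  -- hence so does S
  have hScomm : ∀ (g : G) (v : V), S (ρ g v) = ρ g (S v) := by
    intro g v
    rw [hSdef, aeval_eq_sum_range]
    simp only [LinearMap.sum_apply, LinearMap.smul_apply, map_sum, map_smul]
    exact Finset.sum_congr rfl fun i _ => by rw [hpowcomm i g v]
  have hSadj : ∀ v w : V, B₁ (S v) w = B₁ v (S w) := by
    intro v w
    rw [hSdef, aeval_eq_sum_range]
    simp only [LinearMap.sum_apply, LinearMap.smul_apply, map_sum, map_smul,
      LinearMap.coe_sum, Finset.sum_apply]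
    exact Finset.sum_congr rfl fun i _ => by rw [hpowadj i v w]
  have hSbij : Function.Bijective S := by
    constructor
    · intro v w h
      have : T v = T w := by
        rw [← hS2]; simp only [Module.End.mul_apply, h]
      exact hTbij.1 this
    · intro w
      obtain ⟨u, hu⟩ := hTbij.2 w
      exact ⟨S u, by rw [← Module.End.mul_apply, hS2, hu]⟩
  refine ⟨LinearEquiv.ofBijective S hSbij, fun g v => hScomm g v, fun v w => ?_⟩
  show B₂ v w = B₁ (S v) (S w)
  rw [hSadj v (S w), ← Module.End.mul_apply, hS2, h₁symm, hT, h₂symm]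
end

section
/- Let G be a group, H a subgroup of index 2, and g ∈ G ∖ H. Let (ρ, V) be a finite-dimensional irreducible complex representation of H, and let Φ be a nondegenerate bilinear form on V satisfying Φ(ρ(h)v, ρ(ghg⁻¹)v') = Φ(v, v') for all h ∈ H and v, v' ∈ V. Then there exists a scalar λ ∈ ℂ with λ² = 1 such that Φ(v', ρ(g²)v) = λ Φ(v, v') for all v, v' ∈ V. -/
/-- Let `H` be an index-2 subgroup of `G`, `g ∈ G ∖ H`, `(ρ, V)` an irreducible complex
representation of `H`, and `Φ` a nondegenerate bilinear form on `V` with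
`Φ(ρ(h)v, ρ(ghg⁻¹)v') = Φ(v, v')`. Then there is `λ` with `λ² = 1` and
`Φ(v', ρ(g²)v) = λ Φ(v, v')`. -/
theorem stmt7 (G : Type*) [Group G] (H : Subgroup G) (hH : H.index = 2)
    (hN : H.Normal) (g : G) (hg : g ∉ H) (hg2 : g ^ 2 ∈ H)
    (V : Type*) [AddCommGroup V] [Module ℂ V] [FiniteDimensional ℂ V]
    (ρ : Representation ℂ H V) (hnz : Nontrivial V)
    (hirr : ∀ W : Submodule ℂ V, (∀ (h : H), ∀ v ∈ W, ρ h v ∈ W) → W = ⊥ ∨ W = ⊤)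
    (Φ : V →ₗ[ℂ] V →ₗ[ℂ] ℂ)
    (hΦnd : Function.Bijective (fun v => Φ v))
    (hΦinv : ∀ (h : H) (v v' : V),
      Φ (ρ h v) (ρ ⟨g * (h : G) * g⁻¹, hN.conj_mem (h : G) h.2 g⟩ v') = Φ v v') :
    ∃ lam : ℂ, lam ^ 2 = 1 ∧
      ∀ v v' : V, Φ v' (ρ ⟨g ^ 2, hg2⟩ v) = lam * Φ v v' := by
  classical
  set A : V →ₗ[ℂ] V := ρ ⟨g ^ 2, hg2⟩ with hA
  set c : H → H := fun h => ⟨g * (h : G) * g⁻¹, hN.conj_mem (h : G) h.2 g⟩ with hc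
  set Ψ : V →ₗ[ℂ] V →ₗ[ℂ] ℂ := Φ.flip.comp A with hΨ
  have hΨapp : ∀ v v', Ψ v v' = Φ v' (A v) := fun v v' => rfl
  -- invariance of Ψ
  have hΨinv : ∀ (h : H) (v v' : V), Ψ (ρ h v) (ρ (c h) v') = Ψ v v' := by
    intro h v v'
    have key : ρ (c (c h)) (A v) = A (ρ h v) := by
      have hmul : c (c h) * (⟨g ^ 2, hg2⟩ : H) = (⟨g ^ 2, hg2⟩ : H) * h := by
        ext
        simp only [hc, Subgroup.coe_mul, pow_two]
        group
      calc ρ (c (c h)) (A v) = ρ (c (c h) * ⟨g ^ 2, hg2⟩) v := by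
            rw [map_mul]; rfl
        _ = ρ ((⟨g ^ 2, hg2⟩ : H) * h) v := by rw [hmul]
        _ = A (ρ h v) := by rw [map_mul]; rfl
    calc Ψ (ρ h v) (ρ (c h) v') = Φ (ρ (c h) v') (A (ρ h v)) := rfl
      _ = Φ (ρ (c h) v') (ρ (c (c h)) (A v)) := by rw [key]
      _ = Φ v' (A v) := hΦinv (c h) v' (A v)
      _ = Ψ v v' := rfl
  set T : V →ₗ[ℂ] V := (LinearEquiv.ofBijective Φ hΦnd).symm.toLinearMap ∘ₗ Ψ with hT
  have hTΦ : ∀ v, Φ (T v) = Ψ v := fun v =>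
    (LinearEquiv.ofBijective Φ hΦnd).apply_symm_apply (Ψ v)
  have hΦinj : Function.Injective (fun v => Φ v) := hΦnd.1
  -- inverses
  have hinv : ∀ (h : H) (w : V), ρ (c h) (ρ ((c h)⁻¹) w) = w := by
    intro h w
    have : ρ (c h) * ρ ((c h)⁻¹) = 1 := by rw [← map_mul, mul_inv_cancel, map_one]
    calc ρ (c h) (ρ ((c h)⁻¹) w) = (ρ (c h) * ρ ((c h)⁻¹)) w := rfl
      _ = w := by rw [this]; rfl
  have hcomm : ∀ (h : H) (v : V), T (ρ h v) = ρ h (T v) := by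
    intro h v
    apply hΦinj
    show Φ (T (ρ h v)) = Φ (ρ h (T v))
    rw [hTΦ]
    ext w
    have hw : ρ (c h) (ρ ((c h)⁻¹) w) = w := hinv h w
    calc Ψ (ρ h v) w = Ψ (ρ h v) (ρ (c h) (ρ ((c h)⁻¹) w)) := by rw [hw]
      _ = Ψ v (ρ ((c h)⁻¹) w) := hΨinv h v _
      _ = Φ (T v) (ρ ((c h)⁻¹) w) := by rw [hTΦ]
      _ = Φ (ρ h (T v)) (ρ (c h) (ρ ((c h)⁻¹) w)) := (hΦinv h (T v) _).symm
      _ = Φ (ρ h (T v)) w := by rw [hw]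
  -- eigenvalue of T
  obtain ⟨lam, hlam⟩ := Module.End.exists_eigenvalue (T : Module.End ℂ V)
  have hW : ∀ (h : H), ∀ v ∈ Module.End.eigenspace T lam, ρ h v ∈ Module.End.eigenspace T lam := by
    intro h v hv
    rw [Module.End.mem_eigenspace_iff] at hv ⊢
    rw [hcomm h v, hv, map_smul]
  rcases hirr _ hW with hbot | htop
  · exact absurd hbot hlam
  have hTv : ∀ v : V, T v = lam • v := by
    intro v
    have : v ∈ Module.End.eigenspace T lam := htop ▸ Submodule.mem_top
    rwa [Module.End.mem_eigenspace_iff] at this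
  have hmain : ∀ v v' : V, Φ v' (A v) = lam * Φ v v' := by
    intro v v'
    have h1 : Ψ v v' = Φ (T v) v' := by rw [hTΦ]
    rw [hΨapp] at h1
    rw [h1, hTv, map_smul]
    simp
  -- invariance under A
  have hgg : (⟨g * ((⟨g ^ 2, hg2⟩ : H) : G) * g⁻¹,
      hN.conj_mem ((⟨g ^ 2, hg2⟩ : H) : G) (⟨g ^ 2, hg2⟩ : H).2 g⟩ : H) = ⟨g ^ 2, hg2⟩ :=
    Subtype.ext (by group)
  have hAinv : ∀ v v' : V, Φ (A v) (A v') = Φ v v' := by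
    intro v v'
    have h2 := hΦinv ⟨g ^ 2, hg2⟩ v v'
    rwa [hgg] at h2
  -- lam ^ 2 = 1
  obtain ⟨v, hv⟩ := exists_ne (0 : V)
  have hΦv : Φ v ≠ 0 := by
    intro h0
    exact hv (hΦinj (by simpa using h0))
  obtain ⟨v', hv'⟩ : ∃ v', Φ v v' ≠ 0 := by
    by_contra hall
    push_neg at hall
    exact hΦv (LinearMap.ext hall)
  have hsq : lam ^ 2 * Φ v v' = Φ v v' := by
    have h3 : Φ (A v) (A v') = lam * Φ v' (A v) := hmain v' (A v)
    rw [hAinv, hmain v v'] at h3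
    linear_combination -h3
  have hlam2 : lam ^ 2 = 1 := by
    have : (lam ^ 2 - 1) * Φ v v' = 0 := by rw [sub_mul, hsq]; ring
    rcases mul_eq_zero.mp this with h | h
    · linear_combination h
    · exact absurd h hv'
  exact ⟨lam, hlam2, fun v v' => hmain v v'⟩
end

section
/- Let G be a group, H a subgroup of index 2, and g ∈ G ∖ H. Let (ρ, V) be a finite-dimensional irreducible complex representation of H, let Φ be a nondegenerate bilinear form on V satisfying Φ(ρ(h)v, ρ(ghg⁻¹)v') = Φ(v, v') for all h ∈ H and all v, v' ∈ V, and let λ ∈ ℂ be a scalar such that Φ(v', ρ(g²)v) = λ Φ(v, v') for all v, v'. On V × V define the bilinear form f((v₁, v₂), (w₁, w₂)) = Φ(v₁, w₂) − Φ(w₁, v₂), the linear maps π(h)(v₁, v₂) = (ρ(h)v₁, ρ(ghg⁻¹)v₂) for h ∈ H, and T(v₁, v₂) = (v₂, ρ(g²)v₁). Then f(π(h)x, π(h)y) = f(x, y) for all h ∈ H and x, y ∈ V × V, and f(Tx, Ty) = −λ f(x, y) for all x, y ∈ V × V. -/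
/-- With `H` of index 2 in `G`, `g ∈ G ∖ H`, `(ρ, V)` irreducible, `Φ` nondegenerate with
`Φ(ρ(h)v, ρ(ghg⁻¹)v') = Φ(v, v')` and `Φ(v', ρ(g²)v) = λ Φ(v, v')`: the form
`f((v₁,v₂),(w₁,w₂)) = Φ(v₁,w₂) − Φ(w₁,v₂)` on `V × V` satisfies
`f(π(h)x, π(h)y) = f(x,y)` and `f(Tx, Ty) = −λ f(x,y)` for
`π(h)(v₁,v₂) = (ρ(h)v₁, ρ(ghg⁻¹)v₂)` and `T(v₁,v₂) = (v₂, ρ(g²)v₁)`. -/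
theorem stmt9 (G : Type*) [Group G] (H : Subgroup G) (hH : H.index = 2)
    (hN : H.Normal) (g : G) (hg : g ∉ H) (hg2 : g ^ 2 ∈ H)
    (V : Type*) [AddCommGroup V] [Module ℂ V] [FiniteDimensional ℂ V]
    (ρ : Representation ℂ H V) (hnz : Nontrivial V)
    (hirr : ∀ W : Submodule ℂ V, (∀ (h : H), ∀ v ∈ W, ρ h v ∈ W) → W = ⊥ ∨ W = ⊤)
    (Φ : V →ₗ[ℂ] V →ₗ[ℂ] ℂ)
    (hΦnd : Function.Bijective (fun v => Φ v))
    (hΦinv : ∀ (h : H) (v v' : V),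
      Φ (ρ h v) (ρ ⟨g * (h : G) * g⁻¹, hN.conj_mem (h : G) h.2 g⟩ v') = Φ v v')
    (lam : ℂ)
    (hlam : ∀ v v' : V, Φ v' (ρ ⟨g ^ 2, hg2⟩ v) = lam * Φ v v')
    (f : V × V → V × V → ℂ)
    (hf : ∀ x y : V × V, f x y = Φ x.1 y.2 - Φ y.1 x.2)
    (π : H → V × V → V × V)
    (hπ : ∀ (h : H) (x : V × V),
      π h x = (ρ h x.1, ρ ⟨g * (h : G) * g⁻¹, hN.conj_mem (h : G) h.2 g⟩ x.2))
    (T : V × V → V × V)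
    (hT : ∀ x : V × V, T x = (x.2, ρ ⟨g ^ 2, hg2⟩ x.1)) :
    (∀ (h : H) (x y : V × V), f (π h x) (π h y) = f x y) ∧
    (∀ x y : V × V, f (T x) (T y) = -lam * f x y) := by
  refine ⟨fun h x y => ?_, fun x y => ?_⟩
  · rw [hf, hf, hπ, hπ]
    simp [hΦinv]
  · rw [hf, hf, hT, hT]
    simp only [hlam]
    ring
end

section
/- Let G be a group, H a subgroup of index 2, and g ∈ G ∖ H. Let (ρ, V) be a finite-dimensional irreducible complex representation of H such that ρ is not equivalent to the representation h ↦ ρ(ghg⁻¹) of H. Suppose π is a representation of G on V × V satisfying π(h)(v₁, v₂) = (ρ(h)v₁, ρ(ghg⁻¹)v₂) for all h ∈ H and π(g)(v₁, v₂) = (v₂, ρ(g²)v₁). Then π is irreducible, i.e. V × V has no proper nonzero G-invariant subspace. (This π is a model of the induced representation Ind_H^G ρ.) -/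
/-- With `H` of index 2 in `G`, `g ∈ G ∖ H`, and `(ρ, V)` irreducible with `ρ` not
equivalent to `h ↦ ρ(ghg⁻¹)`, the representation `π` of `G` on `V × V` with
`π(h)(v₁,v₂) = (ρ(h)v₁, ρ(ghg⁻¹)v₂)` for `h ∈ H` and `π(g)(v₁,v₂) = (v₂, ρ(g²)v₁)`
(a model of `Ind_H^G ρ`) is irreducible. -/
theorem stmt10 (G : Type*) [Group G] (H : Subgroup G) (hH : H.index = 2)
    (hN : H.Normal) (g : G) (hg : g ∉ H) (hg2 : g ^ 2 ∈ H)
    (V : Type*) [AddCommGroup V] [Module ℂ V] [FiniteDimensional ℂ V]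
    (ρ : Representation ℂ H V) (hnz : Nontrivial V)
    (hirr : ∀ W : Submodule ℂ V, (∀ (h : H), ∀ v ∈ W, ρ h v ∈ W) → W = ⊥ ∨ W = ⊤)
    (hne : ¬ ∃ e : V ≃ₗ[ℂ] V, ∀ (h : H) (v : V),
      e (ρ h v) = ρ ⟨g * (h : G) * g⁻¹, hN.conj_mem (h : G) h.2 g⟩ (e v))
    (π : Representation ℂ G (V × V))
    (hπH : ∀ (h : H) (x : V × V),
      π (h : G) x = (ρ h x.1, ρ ⟨g * (h : G) * g⁻¹, hN.conj_mem (h : G) h.2 g⟩ x.2))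
    (hπg : ∀ x : V × V, π g x = (x.2, ρ ⟨g ^ 2, hg2⟩ x.1)) :
    ∀ W : Submodule ℂ (V × V), (∀ (s : G), ∀ w ∈ W, π s w ∈ W) → W = ⊥ ∨ W = ⊤ := by
  intro W hW
  by_cases hbot : W = ⊥
  · exact Or.inl hbot
  right
  -- Step A: if W contains a nonzero (v, 0) then W = ⊤
  have keyA : ∀ v : V, v ≠ 0 → ((v, (0:V)) : V × V) ∈ W → W = ⊤ := by
    intro v hv hvW
    have hUinv : ∀ (h : H), ∀ x ∈ W.comap (LinearMap.inl ℂ V V),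
        ρ h x ∈ W.comap (LinearMap.inl ℂ V V) := by
      intro h x hx
      have hx' : ((x, (0:V)) : V × V) ∈ W := hx
      have := hW (h : G) _ hx'
      rw [hπH] at this
      simp only [map_zero] at this
      exact this
    rcases hirr _ hUinv with h1 | h1
    · exfalso
      have : ((v, (0:V)) : V × V) ∈ W := hvW
      have hvU : v ∈ W.comap (LinearMap.inl ℂ V V) := this
      rw [h1] at hvU
      exact hv (Submodule.mem_bot ℂ |>.mp hvU)
    · have h2 : ∀ x : V, ((x, (0:V)) : V × V) ∈ W := by
        intro x
        have : x ∈ W.comap (LinearMap.inl ℂ V V) := h1 ▸ Submodule.mem_top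
        exact this
      have h3 : ∀ x : V, (((0:V), x) : V × V) ∈ W := by
        intro x
        have hm := hW g _ (h2 (ρ (⟨g ^ 2, hg2⟩⁻¹ : H) x))
        rw [hπg] at hm
        have heq : ρ (⟨g ^ 2, hg2⟩ : H) (ρ (⟨g ^ 2, hg2⟩⁻¹ : H) x) = x := by
          rw [← Module.End.mul_apply, ← map_mul, mul_inv_cancel, map_one,
            Module.End.one_apply]
        simpa [heq] using hm
      rw [Submodule.eq_top_iff']
      intro x
      have : ((x.1, (0:V)) : V × V) + ((0:V), x.2) = x := by
        ext <;> simp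
      rw [← this]
      exact W.add_mem (h2 x.1) (h3 x.2)
  -- From W ∋ (0,v): applying π g gives (v, 0) ∈ W
  have swap : ∀ v : V, (((0:V), v) : V × V) ∈ W → ((v, (0:V)) : V × V) ∈ W := by
    intro v hv
    have hm := hW g _ hv
    rw [hπg] at hm
    simpa using hm
  by_cases hc1 : ∃ v : V, v ≠ 0 ∧ ((v, (0:V)) : V × V) ∈ W
  · obtain ⟨v, hv, hvW⟩ := hc1
    exact keyA v hv hvW
  push_neg at hc1
  -- Now: (v,0) ∈ W → v = 0 and (0,v) ∈ W → v = 0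
  have h1 : ∀ v : V, ((v, (0:V)) : V × V) ∈ W → v = 0 := by
    intro v hv
    by_contra hvz
    exact hvz (hc1 v hvz hv |>.elim) |>.elim
  have h2 : ∀ v : V, (((0:V), v) : V × V) ∈ W → v = 0 := fun v hv => h1 v (swap v hv)
  -- projection to first coordinate, restricted to W
  set f : W →ₗ[ℂ] V := (LinearMap.fst ℂ V V).comp W.subtype with hf
  have hfw : ∀ w : W, f w = (w : V × V).1 := fun w => rfl
  have finj : Function.Injective f := by
    intro a b hab
    have hmem : (((a : V × V) - (b : V × V)) : V × V) ∈ W := W.sub_mem a.2 b.2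
    have h1' : ((a : V × V) - (b : V × V)).1 = 0 := by
      have : (a : V × V).1 = (b : V × V).1 := hab
      simp [this]
    have hform : (((a:V×V) - (b:V×V)) : V × V)
        = (((0:V), ((a:V×V) - (b:V×V)).2) : V × V) := by
      ext
      · exact h1'
      · rfl
    rw [hform] at hmem
    have := h2 _ hmem
    have hab2 : (a : V × V).2 = (b : V × V).2 := sub_eq_zero.mp this
    exact Subtype.ext (Prod.ext hab hab2)
  have fsurj : Function.Surjective f := by
    have hPinv : ∀ (h : H), ∀ x ∈ W.map (LinearMap.fst ℂ V V),
        ρ h x ∈ W.map (LinearMap.fst ℂ V V) := by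
      intro h x hx
      obtain ⟨w, hwW, hwx⟩ := hx
      refine ⟨π (h : G) w, hW _ _ hwW, ?_⟩
      have hx : w.1 = x := hwx
      rw [hπH]
      simp [hx]
    rcases hirr _ hPinv with hP | hP
    · exfalso
      obtain ⟨w, hwW, hwz⟩ := Submodule.ne_bot_iff W |>.mp hbot
      have : w.1 ∈ W.map (LinearMap.fst ℂ V V) := ⟨w, hwW, rfl⟩
      rw [hP] at this
      have hw1 : w.1 = 0 := Submodule.mem_bot ℂ |>.mp this
      have hform : w = (((0:V), w.2) : V × V) := by
        ext
        · exact hw1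
        · rfl
      rw [hform] at hwW
      have hw2 := h2 _ hwW
      exact hwz (by rw [hform, hw2]; rfl)
    · intro v
      have : v ∈ W.map (LinearMap.fst ℂ V V) := hP ▸ Submodule.mem_top
      obtain ⟨w, hwW, hwv⟩ := this
      exact ⟨⟨w, hwW⟩, hwv⟩
  set e₁ : W ≃ₗ[ℂ] V := LinearEquiv.ofBijective f ⟨finj, fsurj⟩ with he₁
  set T : V →ₗ[ℂ] V :=
    (LinearMap.snd ℂ V V).comp (W.subtype.comp (e₁.symm : V →ₗ[ℂ] W)) with hT
  have hgraph : ∀ v : V, ((v, T v) : V × V) ∈ W := by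
    intro v
    have h1' : ((e₁.symm v : W) : V × V).1 = v := by
      have : f (e₁.symm v) = v := e₁.apply_symm_apply v
      exact this
    have h2' : ((e₁.symm v : W) : V × V).2 = T v := rfl
    have : ((v, T v) : V × V) = ((e₁.symm v : W) : V × V) := by
      ext
      · exact h1'.symm
      · exact h2'.symm
    rw [this]
    exact (e₁.symm v).2
  have huniq : ∀ v u : V, ((v, u) : V × V) ∈ W → u = T v := by
    intro v u hvu
    have hmem : (((v, u) : V × V) - ((v, T v) : V × V)) ∈ W :=
      W.sub_mem hvu (hgraph v)
    have hform : (((v, u) : V × V) - ((v, T v) : V × V))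
        = (((0:V), u - T v) : V × V) := by
      ext <;> simp
    rw [hform] at hmem
    have := h2 _ hmem
    exact sub_eq_zero.mp this
  have Tinj : Function.Injective T := by
    rw [← LinearMap.ker_eq_bot]
    rw [Submodule.eq_bot_iff]
    intro v hv
    have hv0 : T v = 0 := hv
    have := hgraph v
    rw [hv0] at this
    exact h1 v this
  have Tsurj : Function.Surjective T := LinearMap.injective_iff_surjective.mp Tinj
  refine absurd ?_ hne
  refine ⟨LinearEquiv.ofBijective T ⟨Tinj, Tsurj⟩, ?_⟩
  intro h v
  have hmem := hW (h : G) _ (hgraph v)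
  rw [hπH] at hmem
  have := huniq _ _ hmem
  simpa [LinearEquiv.ofBijective] using this.symm
end

section
/- Let G be a group, H a subgroup of index 2, g ∈ G ∖ H, (ρ, V) a finite-dimensional irreducible complex representation of H, Φ a nondegenerate bilinear form on V with Φ(ρ(h)v, ρ(ghg⁻¹)v') = Φ(v, v') for all h ∈ H, v, v' ∈ V, and λ ∈ {±1} a scalar with Φ(v', ρ(g²)v) = λ Φ(v, v') for all v, v'. Suppose π is a representation of G on V × V satisfying π(h)(v₁, v₂) = (ρ(h)v₁, ρ(ghg⁻¹)v₂) for h ∈ H and π(g)(v₁, v₂) = (v₂, ρ(g²)v₁). Define f₊((v₁, v₂), (w₁, w₂)) = Φ(v₁, w₂) + Φ(w₁, v₂) and f₋((v₁, v₂), (w₁, w₂)) = Φ(v₁, w₂) − Φ(w₁, v₂). Then f₊ is a nondegenerate symmetric bilinear form and f₋ is a nondegenerate alternating bilinear form on V × V; f₊ is π-invariant if and only if λ = 1, and f₋ is π-invariant if and only if λ = −1. In particular π always admits a nondegenerate invariant bilinear form, which can be taken symmetric when λ = 1 and alternating when λ = −1. -/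
section aux
variable {V : Type*} [AddCommGroup V] [Module ℂ V]

lemma funct_ext (ψ ψ' : (V × V) →ₗ[ℂ] ℂ)
    (h1 : ∀ v, ψ (v, 0) = ψ' (v, 0)) (h2 : ∀ v, ψ (0, v) = ψ' (0, v)) : ψ = ψ' := by
  refine LinearMap.ext fun x => ?_
  have hx : (x : V × V) = (x.1, 0) + (0, x.2) := by simp
  rw [hx, map_add, map_add, h1, h2]
end aux



/-- The bilinear form `f₊((v₁,v₂),(w₁,w₂)) = Φ(v₁,w₂) + Φ(w₁,v₂)` on `V × V`. -/
noncomputable def fplus {V : Type*} [AddCommGroup V] [Module ℂ V]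
    (Φ : V →ₗ[ℂ] V →ₗ[ℂ] ℂ) : (V × V) →ₗ[ℂ] (V × V) →ₗ[ℂ] ℂ :=
  LinearMap.mk₂ ℂ (fun x y => Φ x.1 y.2 + Φ y.1 x.2)
    (fun x x' y => by
      simp only [Prod.fst_add, Prod.snd_add, map_add, LinearMap.add_apply]; ring)
    (fun c x y => by
      simp only [Prod.smul_fst, Prod.smul_snd, map_smul, LinearMap.smul_apply,
        smul_eq_mul]; ring)
    (fun x y y' => by
      simp only [Prod.fst_add, Prod.snd_add, map_add, LinearMap.add_apply]; ring)
    (fun c x y => by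
      simp only [Prod.smul_fst, Prod.smul_snd, map_smul, LinearMap.smul_apply,
        smul_eq_mul]; ring)

/-- The bilinear form `f₋((v₁,v₂),(w₁,w₂)) = Φ(v₁,w₂) − Φ(w₁,v₂)` on `V × V`. -/
noncomputable def fminus {V : Type*} [AddCommGroup V] [Module ℂ V]
    (Φ : V →ₗ[ℂ] V →ₗ[ℂ] ℂ) : (V × V) →ₗ[ℂ] (V × V) →ₗ[ℂ] ℂ :=
  LinearMap.mk₂ ℂ (fun x y => Φ x.1 y.2 - Φ y.1 x.2)
    (fun x x' y => by
      simp only [Prod.fst_add, Prod.snd_add, map_add, LinearMap.add_apply]; ring)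
    (fun c x y => by
      simp only [Prod.smul_fst, Prod.smul_snd, map_smul, LinearMap.smul_apply,
        smul_eq_mul]; ring)
    (fun x y y' => by
      simp only [Prod.fst_add, Prod.snd_add, map_add, LinearMap.add_apply]; ring)
    (fun c x y => by
      simp only [Prod.smul_fst, Prod.smul_snd, map_smul, LinearMap.smul_apply,
        smul_eq_mul]; ring)

/-- With `H` of index 2 in `G`, `g ∈ G ∖ H`, `(ρ, V)` irreducible, `Φ` nondegenerate with
the twisted invariance property and `Φ(v', ρ(g²)v) = λ Φ(v,v')` with `λ = ±1`, and `π` the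
induced representation model on `V × V`: `f₊` is a nondegenerate symmetric bilinear form,
`f₋` is a nondegenerate alternating bilinear form, `f₊` is `π`-invariant iff `λ = 1`, `f₋`
is `π`-invariant iff `λ = −1`; in particular `π` admits a nondegenerate invariant bilinear
form, symmetric when `λ = 1`, alternating when `λ = −1`. -/
theorem stmt11 (G : Type*) [Group G] (H : Subgroup G) (hH : H.index = 2)
    (hN : H.Normal) (g : G) (hg : g ∉ H) (hg2 : g ^ 2 ∈ H)
    (V : Type*) [AddCommGroup V] [Module ℂ V] [FiniteDimensional ℂ V]
    (ρ : Representation ℂ H V) (hnz : Nontrivial V)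
    (hirr : ∀ W : Submodule ℂ V, (∀ (h : H), ∀ v ∈ W, ρ h v ∈ W) → W = ⊥ ∨ W = ⊤)
    (Φ : V →ₗ[ℂ] V →ₗ[ℂ] ℂ)
    (hΦnd : Function.Bijective (fun v => Φ v))
    (hΦinv : ∀ (h : H) (v v' : V),
      Φ (ρ h v) (ρ ⟨g * (h : G) * g⁻¹, hN.conj_mem (h : G) h.2 g⟩ v') = Φ v v')
    (lam : ℂ) (hlampm : lam = 1 ∨ lam = -1)
    (hlam : ∀ v v' : V, Φ v' (ρ ⟨g ^ 2, hg2⟩ v) = lam * Φ v v')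
    (π : Representation ℂ G (V × V))
    (hπH : ∀ (h : H) (x : V × V),
      π (h : G) x = (ρ h x.1, ρ ⟨g * (h : G) * g⁻¹, hN.conj_mem (h : G) h.2 g⟩ x.2))
    (hπg : ∀ x : V × V, π g x = (x.2, ρ ⟨g ^ 2, hg2⟩ x.1)) :
    ((∀ x y : V × V, fplus Φ x y = fplus Φ y x) ∧
      Function.Bijective (fun x => fplus Φ x)) ∧
    ((∀ x : V × V, fminus Φ x x = 0) ∧
      Function.Bijective (fun x => fminus Φ x)) ∧
    ((∀ (s : G) (x y : V × V), fplus Φ (π s x) (π s y) = fplus Φ x y) ↔ lam = 1) ∧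
    ((∀ (s : G) (x y : V × V), fminus Φ (π s x) (π s y) = fminus Φ x y) ↔ lam = -1) ∧
    (∃ f : (V × V) →ₗ[ℂ] (V × V) →ₗ[ℂ] ℂ,
      Function.Bijective (fun x => f x) ∧
      (∀ (s : G) (x y : V × V), f (π s x) (π s y) = f x y) ∧
      (lam = 1 → ∀ x y : V × V, f x y = f y x) ∧
      (lam = -1 → ∀ x : V × V, f x x = 0)) := by
  
  have happ : ∀ (x y : V × V), fplus Φ x y = Φ x.1 y.2 + Φ y.1 x.2 := fun x y => rfl
  have happ' : ∀ (x y : V × V), fminus Φ x y = Φ x.1 y.2 - Φ y.1 x.2 := fun x y => rfl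
  have hΦflip : Function.Bijective (fun v => Φ.flip v) :=
    LinearMap.flip_bijective_iff₁.mpr hΦnd
  -- a pair with Φ v w ≠ 0
  obtain ⟨v0, hv0⟩ := exists_ne (0 : V)
  have hΦv0 : Φ v0 ≠ 0 := fun h => hv0 (hΦnd.1 (by simpa [map_zero] using h))
  obtain ⟨w0, hw0⟩ : ∃ w, Φ v0 w ≠ 0 := by
    by_contra hc
    push_neg at hc
    exact hΦv0 (LinearMap.ext hc)
  -- injectivity
  have hinj : ∀ (f : (V × V) →ₗ[ℂ] (V × V) →ₗ[ℂ] ℂ),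
      (∀ x y, f x y = Φ x.1 y.2 + Φ y.1 x.2) ∨ (∀ x y, f x y = Φ x.1 y.2 - Φ y.1 x.2) →
      Function.Injective (fun x => f x) := by
    intro f hf
    rw [show (fun x => f x) = ⇑f from rfl, ← LinearMap.ker_eq_bot, LinearMap.ker_eq_bot']
    intro x hx
    have h1 : Φ x.1 = 0 := by
      refine LinearMap.ext fun w => ?_
      have := congrArg (fun ψ : (V × V) →ₗ[ℂ] ℂ => ψ (0, w)) hx
      rcases hf with hf | hf <;> simpa [hf] using this
    have h2 : Φ.flip x.2 = 0 := by
      refine LinearMap.ext fun w => ?_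
      have := congrArg (fun ψ : (V × V) →ₗ[ℂ] ℂ => ψ (w, 0)) hx
      rcases hf with hf | hf <;> simp only [hf] at this <;>
        simpa [sub_eq_zero, neg_eq_zero] using this
    have hx1 : x.1 = 0 := hΦnd.1 (by simpa [map_zero] using h1)
    have hx2 : x.2 = 0 := hΦflip.1 (by simpa [map_zero] using h2)
    exact Prod.ext hx1 hx2
  -- surjectivity
  have hsurj : ∀ (f : (V × V) →ₗ[ℂ] (V × V) →ₗ[ℂ] ℂ) (ε : ℂ), ε * ε = 1 →
      (∀ x y, f x y = Φ x.1 y.2 + ε * Φ y.1 x.2) →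
      Function.Surjective (fun x => f x) := by
    intro f ε hε hf ψ
    obtain ⟨x₁, hx₁⟩ := hΦnd.2 (ψ.comp (LinearMap.inr ℂ V V))
    obtain ⟨x₂, hx₂⟩ := hΦflip.2 (ε • ψ.comp (LinearMap.inl ℂ V V))
    refine ⟨(x₁, x₂), funct_ext _ _ (fun v => ?_) (fun w => ?_)⟩
    · have h2 : Φ v x₂ = ε * ψ (v, 0) := by
        have := congrArg (fun φ : V →ₗ[ℂ] ℂ => φ v) hx₂
        simpa [LinearMap.flip_apply] using this
      rw [hf]
      simp only [h2]
      rw [← mul_assoc, hε, one_mul]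
      simp
    · have h1 : Φ x₁ w = ψ (0, w) := by
        have := congrArg (fun φ : V →ₗ[ℂ] ℂ => φ w) hx₁
        simpa using this
      rw [hf]
      simp [h1]
  -- coset decomposition
  have hcoset : ∀ s : G, s ∈ H ∨ g⁻¹ * s ∈ H := by
    intro s
    by_cases hs : s ∈ H
    · exact Or.inl hs
    · right
      rw [Subgroup.mul_mem_iff_of_index_two hH]
      simp [inv_mem_iff, hg, hs]
  -- invariance upgrade
  have master : ∀ (f : (V × V) →ₗ[ℂ] (V × V) →ₗ[ℂ] ℂ),
      (∀ (h : H) (x y : V × V), f (π (h : G) x) (π (h : G) y) = f x y) →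
      (∀ x y : V × V, f (π g x) (π g y) = f x y) →
      ∀ (s : G) (x y : V × V), f (π s x) (π s y) = f x y := by
    intro f hfH hfg s x y
    rcases hcoset s with hs | hs
    · exact hfH ⟨s, hs⟩ x y
    · have hsg : s = g * (g⁻¹ * s) := by group
      rw [hsg, map_mul]
      simp only [Module.End.mul_apply]
      rw [hfg, hfH ⟨g⁻¹ * s, hs⟩]
  -- H-invariance for both forms
  have hHplus : ∀ (h : H) (x y : V × V),
      fplus Φ (π (h : G) x) (π (h : G) y) = fplus Φ x y := by
    intro h x y
    rw [happ, happ, hπH, hπH]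
    simp [hΦinv]
  have hHminus : ∀ (h : H) (x y : V × V),
      fminus Φ (π (h : G) x) (π (h : G) y) = fminus Φ x y := by
    intro h x y
    rw [happ', happ', hπH, hπH]
    simp [hΦinv]
  -- action of g on the forms
  have hgplus : ∀ x y : V × V, fplus Φ (π g x) (π g y) = lam * fplus Φ x y := by
    intro x y
    rw [happ, happ, hπg, hπg]
    simp only [hlam]
    ring
  have hgminus : ∀ x y : V × V, fminus Φ (π g x) (π g y) = -lam * fminus Φ x y := by
    intro x y
    rw [happ', happ', hπg, hπg]
    simp only [hlam]
    ring
  -- witness values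
  have hwplus : fplus Φ ((v0, 0) : V × V) ((0, w0) : V × V) = Φ v0 w0 := by
    rw [happ]; simp
  have hwminus : fminus Φ ((v0, 0) : V × V) ((0, w0) : V × V) = Φ v0 w0 := by
    rw [happ']; simp
  -- the four iff components
  have iffplus : (∀ (s : G) (x y : V × V), fplus Φ (π s x) (π s y) = fplus Φ x y) ↔ lam = 1 := by
    constructor
    · intro hi
      have h1 := hi g (v0, 0) (0, w0)
      rw [hgplus, hwplus] at h1
      have := mul_right_cancel₀ hw0 (h1.trans (one_mul (Φ v0 w0)).symm)
      exact this
    · intro hl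
      refine master _ hHplus fun x y => ?_
      rw [hgplus, hl, one_mul]
  have iffminus : (∀ (s : G) (x y : V × V), fminus Φ (π s x) (π s y) = fminus Φ x y) ↔
      lam = -1 := by
    constructor
    · intro hi
      have h1 := hi g (v0, 0) (0, w0)
      rw [hgminus, hwminus] at h1
      have h2 : -lam = 1 := mul_right_cancel₀ hw0 (h1.trans (one_mul (Φ v0 w0)).symm)
      linear_combination -h2
    · intro hl
      refine master _ hHminus fun x y => ?_
      rw [hgminus, hl]
      ring_nf
  have bijplus : Function.Bijective (fun x => fplus Φ x) :=
    ⟨hinj _ (Or.inl happ), hsurj _ 1 (by ring) (fun x y => by rw [happ]; ring)⟩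
  have bijminus : Function.Bijective (fun x => fminus Φ x) :=
    ⟨hinj _ (Or.inr happ'), hsurj _ (-1) (by ring) (fun x y => by rw [happ']; ring)⟩
  refine ⟨⟨fun x y => by rw [happ, happ]; ring, bijplus⟩,
    ⟨fun x => by rw [happ']; ring, bijminus⟩, iffplus, iffminus, ?_⟩
  rcases hlampm with hl | hl
  · exact ⟨fplus Φ, bijplus, iffplus.mpr hl,
      fun _ x y => by rw [happ, happ]; ring,
      fun h => absurd (hl ▸ h) (by norm_num)⟩
  · exact ⟨fminus Φ, bijminus, iffminus.mpr hl,
      fun h => absurd (hl ▸ h) (by norm_num),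
      fun _ x => by rw [happ']; ring⟩
end

section
/- Let u and v be nonnegative rational numbers such that 2u and 2v are integers and u − v is an integer (that is, u and v are either both integers or both half-odd-integers). Then ⌊((u+v)/2)²⌋ + ⌊((u−v)/2)²⌋ = ⌊(u² + v²)/2⌋, where ⌊·⌋ denotes the floor function on rational numbers. -/
lemma sq_emod_four (s : ℤ) : s ^ 2 % 4 = s % 2 := by
  obtain ⟨q, r, hr, rfl⟩ : ∃ q r, (r = 0 ∨ r = 1) ∧ s = 2 * q + r :=
    ⟨s / 2, s % 2, by omega, by omega⟩
  rcases hr with rfl | rfl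
  · rw [show (2 * q + 0) ^ 2 = 4 * q ^ 2 by ring]
    generalize q ^ 2 = Q
    omega
  · rw [show (2 * q + 1) ^ 2 = 4 * (q ^ 2 + q) + 1 by ring]
    generalize q ^ 2 + q = Q
    omega

lemma key (s d : ℤ) : s ^ 2 / 4 + d ^ 2 / 4 = (s ^ 2 + d ^ 2) / 4 := by
  have hs := sq_emod_four s
  have hd := sq_emod_four d
  have h1 : s % 2 = 0 ∨ s % 2 = 1 := by omega
  have h2 : d % 2 = 0 ∨ d % 2 = 1 := by omega
  generalize s ^ 2 = S at *
  generalize d ^ 2 = D at *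
  omega

/-- For nonnegative rationals `u`, `v` with `2u`, `2v` and `u − v` integers,
`⌊((u+v)/2)²⌋ + ⌊((u−v)/2)²⌋ = ⌊(u² + v²)/2⌋. -/
theorem stmt16 (u v : ℚ) (hu : 0 ≤ u) (hv : 0 ≤ v)
    (h2u : ∃ a : ℤ, 2 * u = (a : ℚ)) (h2v : ∃ b : ℤ, 2 * v = (b : ℚ))
    (huv : ∃ c : ℤ, u - v = (c : ℚ)) :
    ⌊((u + v) / 2) ^ 2⌋ + ⌊((u - v) / 2) ^ 2⌋ = ⌊(u ^ 2 + v ^ 2) / 2⌋ := by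
  obtain ⟨b, hb⟩ := h2v
  obtain ⟨c, hc⟩ := huv
  have hs : u + v = ((c + b : ℤ) : ℚ) := by push_cast; linarith
  have h1 : ((u + v) / 2) ^ 2 = (((c + b) ^ 2 : ℤ) : ℚ) / ((4 : ℕ) : ℚ) := by
    rw [hs]; push_cast; ring
  have h2 : ((u - v) / 2) ^ 2 = ((c ^ 2 : ℤ) : ℚ) / ((4 : ℕ) : ℚ) := by
    rw [hc]; push_cast; ring
  have h3 : (u ^ 2 + v ^ 2) / 2 = (((c + b) ^ 2 + c ^ 2 : ℤ) : ℚ) / ((4 : ℕ) : ℚ) := by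
    have hu2 : u = ((c + b : ℤ) : ℚ) + ((c : ℚ)) - u := by
      push_cast; linarith
    push_cast
    have hueq : u = v + c := by linarith
    have hveq : (2 : ℚ) * v = b := hb
    nlinarith [hueq, hveq]
  rw [h1, h2, h3, Rat.floor_intCast_div_natCast, Rat.floor_intCast_div_natCast,
    Rat.floor_intCast_div_natCast]
  exact key (c + b) c
end
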